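/- Let A ∈ ℝ^{n×n}, B ∈ ℝ^{n×m}, C ∈ ℝ^{m×n} with rows c_1,…,c_m, and suppose the system (A,B,C) has relative degree (r_1,…,r_m): for each i = 1,…,m, c_i A^j B = 0 for all j = 0,…,r_i − 2, and the m×m matrix L whose i-th row is c_i A^{r_i−1} B is nonsingular. Then the subspace W = { x ∈ ℝ^n : c_i A^{j−1} x = 0 for all i = 1,…,m and j = 1,…,r_i } is the maximal (A,B)-invariant subspace contained in Ker C; that is, W ⊆ Ker C, there exists F ∈ ℝ^{m×n} with (A+BF)W ⊆ W, and every subspace V ⊆ Ker C satisfying A V ⊆ V + Im B is contained in W. -/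
import Mathlib


open Matrix

/-- `Ker C = { x : Cx = 0 }` as a subspace of `ℝ^n`. -/
noncomputable def kerMat {m n : ℕ} (C : Matrix (Fin m) (Fin n) ℝ) :
    Submodule ℝ (Fin n → ℝ) :=
  LinearMap.ker C.mulVecLin

/-- `Im B = { Bu : u ∈ ℝ^k }` as a subspace of `ℝ^n`. -/
noncomputable def imMat {n k : ℕ} (B : Matrix (Fin n) (Fin k) ℝ) :
    Submodule ℝ (Fin n → ℝ) :=
  LinearMap.range B.mulVecLin

lemma memW_iff {n m : ℕ} (A : Matrix (Fin n) (Fin n) ℝ) (C : Matrix (Fin m) (Fin n) ℝ)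
    (r : Fin m → ℕ) (x : Fin n → ℝ) :
    (x ∈ ⨅ i : Fin m, ⨅ j ∈ Finset.range (r i),
        LinearMap.ker ((LinearMap.proj i : (Fin m → ℝ) →ₗ[ℝ] ℝ) ∘ₗ
          (C * A ^ j).mulVecLin)) ↔
    ∀ i : Fin m, ∀ j < r i, ((C * A ^ j) *ᵥ x) i = 0 := by
  simp [Submodule.mem_iInf, Matrix.mulVecLin_apply]

/-- If the square system `(A,B,C)` has relative degree
`(r_1,…,r_m)`, then `W = { x : c_i A^{j−1} x = 0, i = 1,…,m, j = 1,…,r_i }` is the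
maximal (A,B)-invariant subspace contained in `Ker C`: `W ⊆ Ker C`, some `F`
satisfies `(A+BF)W ⊆ W`, and every subspace `V ⊆ Ker C` with `A V ⊆ V + Im B` is
contained in `W`. -/
theorem stmt19 (n m : ℕ) (A : Matrix (Fin n) (Fin n) ℝ)
    (B : Matrix (Fin n) (Fin m) ℝ) (C : Matrix (Fin m) (Fin n) ℝ)
    (r : Fin m → ℕ) (hr : ∀ i, 1 ≤ r i)
    -- `c_i A^j B = 0` for all `j = 0, …, r_i − 2`
    (hrel : ∀ i : Fin m, ∀ j : ℕ, j + 2 ≤ r i → C i ᵥ* (A ^ j * B) = 0)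
    -- `c_i A^{r_i − 1} B ≠ 0`
    (hne : ∀ i : Fin m, C i ᵥ* (A ^ (r i - 1) * B) ≠ 0)
    -- the matrix `L` with rows `c_i A^{r_i − 1} B` is nonsingular
    (hL : (Matrix.of fun i j : Fin m => (C i ᵥ* (A ^ (r i - 1) * B)) j).det ≠ 0) :
    -- `W = { x : c_i A^{j-1} x = 0 for i = 1,…,m and j = 1,…,r_i }`
    (⨅ i : Fin m, ⨅ j ∈ Finset.range (r i),
        LinearMap.ker ((LinearMap.proj i : (Fin m → ℝ) →ₗ[ℝ] ℝ) ∘ₗ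
          (C * A ^ j).mulVecLin)) ≤ kerMat C ∧
    (∃ F : Matrix (Fin m) (Fin n) ℝ,
      Submodule.map (A + B * F).mulVecLin
        (⨅ i : Fin m, ⨅ j ∈ Finset.range (r i),
          LinearMap.ker ((LinearMap.proj i : (Fin m → ℝ) →ₗ[ℝ] ℝ) ∘ₗ
            (C * A ^ j).mulVecLin)) ≤
      (⨅ i : Fin m, ⨅ j ∈ Finset.range (r i),
        LinearMap.ker ((LinearMap.proj i : (Fin m → ℝ) →ₗ[ℝ] ℝ) ∘ₗ
          (C * A ^ j).mulVecLin))) ∧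
    (∀ V : Submodule ℝ (Fin n → ℝ), V ≤ kerMat C →
      Submodule.map A.mulVecLin V ≤ V ⊔ imMat B →
      V ≤ (⨅ i : Fin m, ⨅ j ∈ Finset.range (r i),
        LinearMap.ker ((LinearMap.proj i : (Fin m → ℝ) →ₗ[ℝ] ℝ) ∘ₗ
          (C * A ^ j).mulVecLin))) := by
  refine ⟨?_, ?_, ?_⟩
  · -- W ≤ ker C
    intro x hx
    rw [memW_iff] at hx
    have : ∀ i, (C *ᵥ x) i = 0 := by
      intro i
      have := hx i 0 (hr i)
      simpa using this
    show C.mulVecLin x = 0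
    simp only [Matrix.mulVecLin_apply]
    funext i; exact this i
  · -- invariance under A + B F
    set L : Matrix (Fin m) (Fin m) ℝ :=
      Matrix.of fun i j : Fin m => (C i ᵥ* (A ^ (r i - 1) * B)) j with hLdef
    set M : Matrix (Fin m) (Fin n) ℝ :=
      Matrix.of fun i j => (C * A ^ (r i)) i j with hMdef
    have hLinv : L * L⁻¹ = 1 := Matrix.mul_nonsing_inv L (isUnit_iff_ne_zero.mpr hL)
    refine ⟨-(L⁻¹ * M), ?_⟩
    intro y hy
    obtain ⟨x, hx, rfl⟩ := Submodule.mem_map.mp hy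
    rw [memW_iff] at hx
    rw [memW_iff]
    intro i j hj
    have hrow : (C * A ^ j * B) i = C i ᵥ* (A ^ j * B) := by
      rw [Matrix.mul_assoc]; exact Matrix.mul_apply_eq_vecMul _ _ _
    have key : (C * A ^ j) *ᵥ ((A + B * -(L⁻¹ * M)).mulVecLin x)
        = (C * A ^ (j + 1)) *ᵥ x + (C * A ^ j * B) *ᵥ ((-(L⁻¹ * M)) *ᵥ x) := by
      simp only [Matrix.mulVecLin_apply, Matrix.mulVec_mulVec]
      rw [Matrix.mul_add]
      rw [Matrix.add_mulVec]
      congr 1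
      · rw [pow_succ, Matrix.mul_assoc]
      · rw [← Matrix.mul_assoc]
    rw [key]
    rcases lt_or_eq_of_le (Nat.succ_le_of_lt hj) with h1 | h1'
    all_goals try have h1 : j + 1 = r i := h1'
    · -- j + 1 < r i
      have t1 : ((C * A ^ (j + 1)) *ᵥ x) i = 0 := hx i (j + 1) h1
      have t2 : ((C * A ^ j * B) *ᵥ ((-(L⁻¹ * M)) *ᵥ x)) i = 0 := by
        show (C * A ^ j * B) i ⬝ᵥ _ = 0
        rw [hrow, hrel i j h1]
        simp
      rw [Pi.add_apply, t1, t2, add_zero]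
    · -- j + 1 = r i
      have hji : j = r i - 1 := by omega
      have t1 : ((C * A ^ (j + 1)) *ᵥ x) i = (M *ᵥ x) i := by
        rw [h1]
        skip
        simp only [Matrix.mulVec, hMdef]
        rfl
      have t2 : ((C * A ^ j * B) *ᵥ ((-(L⁻¹ * M)) *ᵥ x)) i
          = -((M *ᵥ x) i) := by
        have hrowL : (C * A ^ j * B) i = L i := by
          rw [hrow, hji]; rfl
        show (C * A ^ j * B) i ⬝ᵥ _ = _
        rw [hrowL]
        have : L i ⬝ᵥ ((-(L⁻¹ * M)) *ᵥ x) = (L *ᵥ ((-(L⁻¹ * M)) *ᵥ x)) i := rfl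
        rw [this, Matrix.mulVec_mulVec]
        have : L * -(L⁻¹ * M) = -M := by
          rw [Matrix.mul_neg, ← Matrix.mul_assoc, hLinv, Matrix.one_mul]
        rw [this]
        simp [Matrix.neg_mulVec]
      rw [Pi.add_apply, t1, t2, add_neg_cancel]
  · -- maximality
    intro V hVC hVinv
    intro x hx
    rw [memW_iff]
    -- auxiliary: A^j x ∈ V ⊔ (⨆ k ∈ range j, map (A^k) (im B))
    have aux : ∀ j : ℕ, (A ^ j) *ᵥ x ∈
        V ⊔ ⨆ k ∈ Finset.range j, Submodule.map (A ^ k).mulVecLin (imMat B) := by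
      intro j
      induction j with
      | zero =>
        simp only [pow_zero, Matrix.one_mulVec]
        exact Submodule.mem_sup_left hx
      | succ j ih =>
        rcases Submodule.mem_sup.mp ih with ⟨v, hv, b, hb, hvb⟩
        have step : (A ^ (j + 1)) *ᵥ x = A *ᵥ v + A *ᵥ b := by
          rw [pow_succ', ← Matrix.mulVec_mulVec, ← hvb, Matrix.mulVec_add]
        rw [step]
        refine Submodule.add_mem _ ?_ ?_
        · -- A v ∈ V ⊔ im B ≤ target
          have h1 : A *ᵥ v ∈ V ⊔ imMat B :=
            hVinv ⟨v, hv, rfl⟩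
          have hsub : imMat B ≤ ⨆ k ∈ Finset.range (j + 1),
              Submodule.map ((A ^ k : Matrix (Fin n) (Fin n) ℝ)).mulVecLin (imMat B) := by
            have h0 : imMat B = Submodule.map ((A ^ 0 : Matrix (Fin n) (Fin n) ℝ)).mulVecLin (imMat B) := by
              simp [Matrix.mulVecLin_one]
            exact le_of_eq h0 |>.trans
              (le_iSup₂ (f := fun k _ => Submodule.map ((A ^ k : Matrix (Fin n) (Fin n) ℝ)).mulVecLin (imMat B))
                0 (Finset.mem_range.mpr (Nat.succ_pos j)))
          exact sup_le_sup_left hsub V h1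
        · -- A b ∈ target
          refine Submodule.mem_sup_right ?_
          have hmem : A *ᵥ b ∈ Submodule.map A.mulVecLin
              (⨆ k ∈ Finset.range j, Submodule.map ((A ^ k : Matrix (Fin n) (Fin n) ℝ)).mulVecLin (imMat B)) :=
            ⟨b, hb, rfl⟩
          have hmap : Submodule.map A.mulVecLin
              (⨆ k ∈ Finset.range j, Submodule.map ((A ^ k : Matrix (Fin n) (Fin n) ℝ)).mulVecLin (imMat B))
              ≤ ⨆ k ∈ Finset.range (j + 1),
                Submodule.map ((A ^ k : Matrix (Fin n) (Fin n) ℝ)).mulVecLin (imMat B) := by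
            simp only [Submodule.map_iSup]
            refine iSup_le fun k => iSup_le fun hk => ?_
            rw [← Submodule.map_comp, ← Matrix.mulVecLin_mul, ← pow_succ']
            exact le_iSup₂ (f := fun k _ => Submodule.map ((A ^ k : Matrix (Fin n) (Fin n) ℝ)).mulVecLin (imMat B))
              (k + 1) (Finset.mem_range.mpr (Nat.succ_lt_succ (Finset.mem_range.mp hk)))
          exact hmap hmem
    intro i j hj
    rcases Submodule.mem_sup.mp (aux j) with ⟨v, hv, b, hb, hvb⟩
    have hCv : (C *ᵥ v) i = 0 := by
      have : C.mulVecLin v = 0 := hVC hv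
      rw [Matrix.mulVecLin_apply] at this
      rw [this]; rfl
    have hCb : (C *ᵥ b) i = 0 := by
      set f : (Fin n → ℝ) →ₗ[ℝ] ℝ :=
        (LinearMap.proj i : (Fin m → ℝ) →ₗ[ℝ] ℝ) ∘ₗ C.mulVecLin with hf
      have hker : (⨆ k ∈ Finset.range j, Submodule.map ((A ^ k : Matrix (Fin n) (Fin n) ℝ)).mulVecLin (imMat B))
          ≤ LinearMap.ker f := by
        refine iSup₂_le ?_
        intro k hk
        have hk' := Finset.mem_range.mp hk
        rintro y ⟨z, ⟨u, rfl⟩, rfl⟩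
        simp only [LinearMap.mem_ker, hf, LinearMap.coe_comp, Function.comp_apply,
          Matrix.mulVecLin_apply, LinearMap.proj_apply]
        rw [Matrix.mulVec_mulVec, Matrix.mulVec_mulVec]
        have hrow : (C * A ^ k * B) i = C i ᵥ* (A ^ k * B) := by
          rw [Matrix.mul_assoc]; exact Matrix.mul_apply_eq_vecMul _ _ _
        show (C * A ^ k * B) i ⬝ᵥ u = 0
        rw [hrow, hrel i k (by omega : k + 2 ≤ r i)]
        simp
      have := hker hb
      rw [LinearMap.mem_ker, hf] at this
      simpa using this
    show ((C * A ^ j) *ᵥ x) i = 0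
    rw [← Matrix.mulVec_mulVec, ← hvb, Matrix.mulVec_add]
    show (C *ᵥ v) i + (C *ᵥ b) i = 0
    rw [hCv, hCb, add_zero]
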